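/- Let H be an RKHS on X ⊆ ℝⁿ with a C₃-Lipschitz kernel map x ↦ k_x, and let c₂' satisfy |c₂'(z₁,w₁) − c₂'(z₂,w₂)| ≤ C₁ L_{p₁}(z₁,z₂)(‖z₁−z₂‖ + |w₁−w₂|) where L_p(z₁,z₂) = max{1,‖z₁‖,‖z₂‖}^{p−1}. Fix f ∈ H with ‖f‖_H ≤ B. Then there exists a constant C (depending on C₁, C₃, B, β_X := sup_x ‖k_x‖_H/max{1,‖x‖}) such that for every unit vector d ∈ H and all z₁ = (x₁,y₁), z₂ = (x₂,y₂) ∈ Z: |⟨c₂'(z₁, f(x₁))k_{x₁} − c₂'(z₂, f(x₂))k_{x₂}, d⟩| ≤ C · L_{p₁+1}(z₁, z₂) · ‖z₁ − z₂‖. -/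

import Mathlib

open scoped RealInnerProductSpace

/-!
Write `m = max {1, ‖z₁‖, ‖z₂‖}` and `aᵢ = c₂'(zᵢ, f(xᵢ))`, and split
`a₁ k₁ - a₂ k₂ = a₁ (k₁ - k₂) + (a₁ - a₂) k₂`. By Cauchy–Schwarz the evaluation `x ↦ ⟪f, k x⟫`
inherits from the kernel map a Lipschitz bound and linear growth. Comparing with `c₂'(0, 0)` then
gives `|a₁| = O(m ^ (p₁ - 1) ⬝ m)`, and the Lipschitz condition on `c₂'` gives
`|a₁ - a₂| = O(m ^ (p₁ - 1) ‖z₁ - z₂‖)`; together with `‖k₁ - k₂‖ = O(‖z₁ - z₂‖)` and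
`‖k₂‖ = O(m)` both terms are `O(m ^ p₁ ‖z₁ - z₂‖)`.
-/

theorem norm_smul_sub_smul_le {𝕜 F : Type*} [NormedField 𝕜] [SeminormedAddCommGroup F]
    [NormedSpace 𝕜 F] (a b : 𝕜) (u v : F) :
    ‖a • u - b • v‖ ≤ ‖a‖ * ‖u - v‖ + ‖a - b‖ * ‖v‖ := by
  calc ‖a • u - b • v‖ = ‖a • (u - v) + (a - b) • v‖ := by
        rw [smul_sub, sub_smul, sub_add_sub_cancel]
    _ ≤ ‖a‖ * ‖u - v‖ + ‖a - b‖ * ‖v‖ := by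
        simpa only [norm_smul] using norm_add_le (a • (u - v)) ((a - b) • v)

theorem abs_real_inner_le_of_norm_le {F : Type*} [NormedAddCommGroup F] [InnerProductSpace ℝ F]
    {f g : F} {B b : ℝ} (hf : ‖f‖ ≤ B) (hg : ‖g‖ ≤ b) : |⟪f, g⟫| ≤ B * b :=
  (abs_real_inner_le_norm f g).trans
    (mul_le_mul hf hg (norm_nonneg g) ((norm_nonneg f).trans hf))

section GrowthLipschitz

variable {Z : Type*} [NormedAddCommGroup Z]

/-- The paper's Lipschitz condition with growth factor `L_p(z₁, z₂)`, written with `q = p - 1`. -/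
def GrowthLipschitzWith (C q : ℝ) (c : Z → ℝ → ℝ) : Prop :=
  ∀ z₁ z₂ : Z, ∀ w₁ w₂ : ℝ,
    |c z₁ w₁ - c z₂ w₂| ≤ C * max 1 (max ‖z₁‖ ‖z₂‖) ^ q * (‖z₁ - z₂‖ + |w₁ - w₂|)

variable {C q : ℝ} {c : Z → ℝ → ℝ}

theorem GrowthLipschitzWith.abs_le (hc : GrowthLipschitzWith C q c) (hC : 0 ≤ C) (hq : 0 ≤ q)
    {z : Z} {w a m : ℝ} (hm : 1 ≤ m) (hz : ‖z‖ ≤ m) (hw : |w| ≤ a * m) :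
    |c z w| ≤ (|c 0 0| + C * (1 + a)) * m ^ q * m := by
  have h₀ : |c z w - c 0 0| ≤ C * max 1 ‖z‖ ^ q * (‖z‖ + |w|) := by
    simpa [max_eq_left (norm_nonneg z)] using hc z 0 w 0
  have hpow : max 1 ‖z‖ ^ q ≤ m ^ q :=
    Real.rpow_le_rpow (zero_le_one.trans (le_max_left _ _)) (max_le hm hz) hq
  have hmq : 1 ≤ m ^ q * m := one_le_mul_of_one_le_of_one_le (Real.one_le_rpow hm hq) hm
  calc |c z w| ≤ |c 0 0| + |c z w - c 0 0| := by
        linarith [abs_sub_abs_le_abs_sub (c z w) (c 0 0)]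
    _ ≤ |c 0 0| * (m ^ q * m) + C * m ^ q * (m + a * m) := by
        gcongr
        · exact le_mul_of_one_le_right (abs_nonneg _) hmq
        · exact h₀.trans (by gcongr)
    _ = (|c 0 0| + C * (1 + a)) * m ^ q * m := by ring

theorem GrowthLipschitzWith.abs_sub_le (hc : GrowthLipschitzWith C q c) (hC : 0 ≤ C)
    {z₁ z₂ : Z} {w₁ w₂ L : ℝ} (hw : |w₁ - w₂| ≤ L * ‖z₁ - z₂‖) :
    |c z₁ w₁ - c z₂ w₂| ≤ C * (1 + L) * max 1 (max ‖z₁‖ ‖z₂‖) ^ q * ‖z₁ - z₂‖ := by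
  calc |c z₁ w₁ - c z₂ w₂|
      ≤ C * max 1 (max ‖z₁‖ ‖z₂‖) ^ q * (‖z₁ - z₂‖ + L * ‖z₁ - z₂‖) :=
        (hc z₁ z₂ w₁ w₂).trans (by gcongr)
    _ = C * (1 + L) * max 1 (max ‖z₁‖ ‖z₂‖) ^ q * ‖z₁ - z₂‖ := by ring

end GrowthLipschitz

/-- The map `z ↦ c₂'(z, f(x)) k_x` is locally Lipschitz of growth order `p₁ + 1` in `z`,
uniformly over unit test directions `d`: there is a constant `C` with
`|⟪c₂'(z₁,f(x₁))k_{x₁} - c₂'(z₂,f(x₂))k_{x₂}, d⟫| ≤ C ⬝ L_{p₁+1}(z₁,z₂) ⬝ ‖z₁ - z₂‖`,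
where `L_p(z₁,z₂) = max{1,‖z₁‖,‖z₂‖}^{p-1}` and the evaluation is `f(x) = ⟪f, k x⟫`. -/
theorem stmt_16 {H X Y : Type*} [NormedAddCommGroup H] [InnerProductSpace ℝ H]
    [NormedAddCommGroup X] [NormedAddCommGroup Y]
    (k : X → H) (C₁ C₃ βX B p₁ : ℝ) (hp₁ : 1 ≤ p₁) (hC₁ : 0 ≤ C₁) (hC₃ : 0 ≤ C₃)
    (hk : ∀ x₁ x₂ : X, ‖k x₁ - k x₂‖ ≤ C₃ * ‖x₁ - x₂‖)
    (hkb : ∀ x : X, ‖k x‖ ≤ βX * max 1 ‖x‖)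
    (c' : X × Y → ℝ → ℝ)
    (hc' : ∀ z₁ z₂ : X × Y, ∀ w₁ w₂ : ℝ,
      |c' z₁ w₁ - c' z₂ w₂| ≤
        C₁ * max 1 (max ‖z₁‖ ‖z₂‖) ^ (p₁ - 1) * (‖z₁ - z₂‖ + |w₁ - w₂|))
    (f : H) (hf : ‖f‖ ≤ B) :
    ∃ C : ℝ, ∀ d : H, ‖d‖ = 1 → ∀ z₁ z₂ : X × Y,
      |⟪c' z₁ ⟪f, k z₁.1⟫ • k z₁.1 - c' z₂ ⟪f, k z₂.1⟫ • k z₂.1, d⟫| ≤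
        C * max 1 (max ‖z₁‖ ‖z₂‖) ^ ((p₁ + 1) - 1) * ‖z₁ - z₂‖ := by
  have hβ : 0 ≤ βX := by simpa using (norm_nonneg _).trans (hkb 0)
  refine ⟨(|c' 0 0| + C₁ * (1 + B * βX)) * C₃ + C₁ * (1 + B * C₃) * βX,
    fun d hd z₁ z₂ => ?_⟩
  set m := max 1 (max ‖z₁‖ ‖z₂‖)
  have hm : 1 ≤ m := le_max_left _ _
  have hz₁ : ‖z₁‖ ≤ m := (le_max_left _ _).trans (le_max_right _ _)
  have hz₂ : ‖z₂‖ ≤ m := (le_max_right _ _).trans (le_max_right _ _)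
  have hk_le : ∀ z : X × Y, ‖z‖ ≤ m → ‖k z.1‖ ≤ βX * m := fun z hz =>
    (hkb z.1).trans (by gcongr; exact max_le hm ((norm_fst_le z).trans hz))
  have hk_sub : ‖k z₁.1 - k z₂.1‖ ≤ C₃ * ‖z₁ - z₂‖ :=
    (hk _ _).trans (by gcongr; exact norm_fst_le (z₁ - z₂))
  have ha₁ : |c' z₁ ⟪f, k z₁.1⟫| ≤ (|c' 0 0| + C₁ * (1 + B * βX)) * m ^ (p₁ - 1) * m :=
    GrowthLipschitzWith.abs_le hc' hC₁ (by linarith) hm hz₁ <| by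
      simpa only [mul_assoc] using abs_real_inner_le_of_norm_le hf (hk_le z₁ hz₁)
  have ha_sub : |c' z₁ ⟪f, k z₁.1⟫ - c' z₂ ⟪f, k z₂.1⟫| ≤
      C₁ * (1 + B * C₃) * m ^ (p₁ - 1) * ‖z₁ - z₂‖ :=
    GrowthLipschitzWith.abs_sub_le hc' hC₁ <| by
      simpa only [← inner_sub_right, mul_assoc] using abs_real_inner_le_of_norm_le hf hk_sub
  have hexp : m ^ ((p₁ + 1) - 1) = m ^ (p₁ - 1) * m := by
    rw [show (p₁ + 1) - 1 = (p₁ - 1) + 1 by ring, Real.rpow_add (by positivity), Real.rpow_one]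
  calc _ ≤ ‖c' z₁ ⟪f, k z₁.1⟫ • k z₁.1 - c' z₂ ⟪f, k z₂.1⟫ • k z₂.1‖ := by
        simpa [hd] using abs_real_inner_le_norm _ d
    _ ≤ |c' z₁ ⟪f, k z₁.1⟫| * ‖k z₁.1 - k z₂.1‖
        + |c' z₁ ⟪f, k z₁.1⟫ - c' z₂ ⟪f, k z₂.1⟫| * ‖k z₂.1‖ := norm_smul_sub_smul_le _ _ _ _
    _ ≤ (|c' 0 0| + C₁ * (1 + B * βX)) * m ^ (p₁ - 1) * m * (C₃ * ‖z₁ - z₂‖)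
        + C₁ * (1 + B * C₃) * m ^ (p₁ - 1) * ‖z₁ - z₂‖ * (βX * m) := by
        have hB : 0 ≤ B := (norm_nonneg f).trans hf
        gcongr
        exact hk_le z₂ hz₂
    _ = _ := by rw [hexp]; ring
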